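/- For every natural number n, det(J_n) = 2^n · (−b/a)^{ε(n)}, where ε(n) = 0 if n is even and 1 if n is odd. Equivalently, det(J_n) = 2^n if n is even and det(J_n) = −2^n·(b/a) if n is odd. -/

import Mathlib

noncomputable def JM (a b : ℝ) : ℕ → Matrix (Fin 2) (Fin 2) ℝ
  | 0 => 1
  | 1 => !![b, 2 * b / a; 1, 0]
  | n + 2 => (if Even (n + 2) then a else b) • JM a b (n + 1) + (2 : ℝ) • JM a b n

/-!
The determinant of a `2 × 2` matrix is a quadratic form; with its polarization `mixedDet`,
`det (c • X + d • Y) = c² det X + c d mixedDet X Y + d² det Y`. Along the recurrence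
`J (n + 2) = c • J (n + 1) + 2 • J n` the pair `(det J (n + 1), mixedDet (J (n + 1)) (J n))`
therefore evolves linearly, and the closed forms `det J (2k) = 4 ^ k`,
`det J (2k + 1) = -2 · 4 ^ k · b / a` and `mixedDet (J (2k + 1)) (J (2k)) = 4 ^ k b` follow by
induction on `k`, each step passing once through `c = a` and once through `c = b`.
-/

namespace Matrix

variable {R : Type*} [CommRing R]

def mixedDet (X Y : Matrix (Fin 2) (Fin 2) R) : R :=
  X 0 0 * Y 1 1 + X 1 1 * Y 0 0 - X 0 1 * Y 1 0 - X 1 0 * Y 0 1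

theorem det_smul_add_smul (c d : R) (X Y : Matrix (Fin 2) (Fin 2) R) :
    det (c • X + d • Y) = c ^ 2 * det X + c * d * mixedDet X Y + d ^ 2 * det Y := by
  simp only [det_fin_two, mixedDet, add_apply, smul_apply, smul_eq_mul]
  ring

theorem mixedDet_smul_add_smul_self (c d : R) (X Y : Matrix (Fin 2) (Fin 2) R) :
    mixedDet (c • X + d • Y) X = 2 * c * det X + d * mixedDet X Y := by
  simp only [det_fin_two, mixedDet, add_apply, smul_apply, smul_eq_mul]
  ring

end Matrix

open Matrix

theorem JM_add_two (a b : ℝ) (n : ℕ) :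
    JM a b (n + 2) = (if Even n then a else b) • JM a b (n + 1) + (2 : ℝ) • JM a b n := by
  simp only [JM, Nat.even_add, even_two, iff_true]

theorem det_JM_two_mul (a b : ℝ) (ha : a ≠ 0) (k : ℕ) :
    (JM a b (2 * k)).det = 4 ^ k ∧
    (JM a b (2 * k + 1)).det = -(2 * 4 ^ k * (b / a)) ∧
    mixedDet (JM a b (2 * k + 1)) (JM a b (2 * k)) = 4 ^ k * b := by
  induction k with
  | zero =>
    refine ⟨by simp [JM], ?_, ?_⟩
    · simp only [JM, det_fin_two_of]
      ring
    · simp [JM, mixedDet]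
  | succ k ih =>
    obtain ⟨hD₀, hD₁, hE₀⟩ := ih
    have h_even : Even (2 * k) := even_two_mul k
    have h_odd : ¬Even (2 * k + 1) := Nat.not_even_iff_odd.mpr (odd_two_mul_add_one k)
    have hJ₂ : JM a b (2 * k + 2) = a • JM a b (2 * k + 1) + (2 : ℝ) • JM a b (2 * k) := by
      rw [JM_add_two, if_pos h_even]
    have hJ₃ : JM a b (2 * k + 3) = b • JM a b (2 * k + 2) + (2 : ℝ) • JM a b (2 * k + 1) := by
      rw [JM_add_two, if_neg h_odd]
    have hE₁ : mixedDet (JM a b (2 * k + 2)) (JM a b (2 * k + 1)) = -(2 * 4 ^ k * b) := by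
      rw [hJ₂, mixedDet_smul_add_smul_self, hD₁, hE₀]
      field_simp
      ring
    have hD₂ : (JM a b (2 * k + 2)).det = 4 ^ (k + 1) := by
      rw [hJ₂, det_smul_add_smul, hD₁, hE₀, hD₀]
      field_simp
      ring
    refine ⟨hD₂, ?_, ?_⟩
    · change (JM a b (2 * k + 3)).det = _
      rw [hJ₃, det_smul_add_smul, hD₂, hE₁, hD₁]
      field_simp
      ring
    · change mixedDet (JM a b (2 * k + 3)) (JM a b (2 * k + 2)) = _
      rw [hJ₃, mixedDet_smul_add_smul_self, hD₂, hE₁]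
      ring

theorem stmt3 (a b : ℝ) (ha : a ≠ 0) (n : ℕ) :
    (JM a b n).det = 2 ^ n * (-(b / a)) ^ (n % 2) := by
  obtain ⟨k, rfl | rfl⟩ := Nat.even_or_odd' n
  · rw [(det_JM_two_mul a b ha k).1, pow_mul]
    norm_num
  · rw [(det_JM_two_mul a b ha k).2.1, pow_succ, pow_mul, Nat.mul_add_mod]
    ring
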